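/- Let R be a principal ideal domain, (M,λ) a non-degenerate symmetric bilinear form on a finitely generated free module, (v₁,...,v_k) an isotropic unimodular sequence, and (w₁,...,w_k), (w'₁,...,w'_k) two witnessing sequences to it. Then the orthogonal complements of the subforms spanned by {v₁,w₁,...,v_k,w_k} and {v₁,w'₁,...,v_k,w'_k} are isometric. Explicitly, for a basis a₁,...,a_n of the first complement, the vectors a'ᵢ = aᵢ - ∑ⱼ λ(aᵢ, w'ⱼ) vⱼ lie in the second complement and satisfy λ(a'ᵢ, a'ⱼ) = λ(aᵢ, aⱼ), giving an isometry. -/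

import Mathlib

/-- An isotropic unimodular sequence: the `v i` form a basis of a free direct summand
of `M` and are pairwise (and self) orthogonal for `B`. -/
def IsoUnimodSeq (R : Type*) [CommRing R] {M : Type*} [AddCommGroup M] [Module R M]
    (B : LinearMap.BilinForm R M) {k : ℕ} (v : Fin k → M) : Prop :=
  LinearIndependent R v ∧
  (∃ q : Submodule R M, IsCompl (Submodule.span R (Set.range v)) q) ∧
  ∀ i j, B (v i) (v j) = 0

/-- A witnessing sequence `w` to an isotropic unimodular sequence `v`:
`B vᵢ wⱼ = δᵢⱼ` and `B wᵢ wⱼ = 0` for `i ≠ j`. -/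
def Witnessing (R : Type*) [CommRing R] {M : Type*} [AddCommGroup M] [Module R M]
    (B : LinearMap.BilinForm R M) {k : ℕ} (v w : Fin k → M) : Prop :=
  (∀ i j, B (v i) (w j) = if i = j then 1 else 0) ∧
  ∀ i j, i ≠ j → B (w i) (w j) = 0

/-!
For `a` orthogonal to all `vᵢ`, the map `a ↦ a - ∑ⱼ B(a, w'ⱼ) vⱼ` only adds isotropic vectors
orthogonal to `a`, so it preserves the form, and the duality `B(vᵢ, w'ⱼ) = δᵢⱼ` kills the
pairings with the `w'ᵢ`. Shifting back along `w` undoes it on the complement of `{vᵢ, wᵢ}`,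
since there the shifted vector pairs with `wᵢ` to `-B(a, w'ᵢ)`.
-/

open LinearMap.BilinForm Submodule

section WitnessShift

variable {R M : Type*} [CommRing R] [AddCommGroup M] [Module R M] (B : LinearMap.BilinForm R M)

theorem mem_orthogonal_span_iff {S : Set M} {m : M} :
    m ∈ B.orthogonal (span R S) ↔ ∀ s ∈ S, B s m = 0 :=
  ⟨fun h s hs => h s (subset_span hs),
    fun h _ hn => (span_le (p := LinearMap.ker (B.flip m))).2 h hn⟩

variable {k : ℕ}

theorem mem_orthogonal_span_range_union_iff {v w : Fin k → M} {m : M} :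
    m ∈ B.orthogonal (span R (Set.range v ∪ Set.range w)) ↔
      (∀ i, B (v i) m = 0) ∧ ∀ i, B (w i) m = 0 := by
  simp only [mem_orthogonal_span_iff, Set.mem_union, or_imp, forall_and, Set.forall_mem_range]

noncomputable def witnessShift (v u : Fin k → M) : M →ₗ[R] M :=
  LinearMap.id - ∑ j, (B.flip (u j)).smulRight (v j)

theorem witnessShift_apply (v u : Fin k → M) (a : M) :
    witnessShift B v u a = a - ∑ j, B a (u j) • v j := by
  simp [witnessShift, LinearMap.sum_apply]

variable {B} {v u w w' x : Fin k → M}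

theorem apply_witnessShift_of_isotropic (hvv : ∀ i j, B (v i) (v j) = 0) (a : M) (i : Fin k) :
    B (v i) (witnessShift B v u a) = B (v i) a := by
  simp [witnessShift_apply, hvv]

theorem witnessShift_apply_of_dual (hvx : ∀ i j, B (v i) (x j) = if i = j then 1 else 0)
    (a : M) (i : Fin k) : B (witnessShift B v u a) (x i) = B a (x i) - B a (u i) := by
  simp [witnessShift_apply, hvx]

theorem witnessShift_mem_orthogonal (hsymm : B.IsSymm) (hvv : ∀ i j, B (v i) (v j) = 0)
    (hvu : ∀ i j, B (v i) (u j) = if i = j then 1 else 0) {a : M} (ha : ∀ i, B (v i) a = 0) :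
    witnessShift B v u a ∈ B.orthogonal (span R (Set.range v ∪ Set.range u)) :=
  (mem_orthogonal_span_range_union_iff B).2
    ⟨fun i => by rw [apply_witnessShift_of_isotropic hvv, ha],
     fun i => by rw [hsymm.eq, witnessShift_apply_of_dual hvu, sub_self]⟩

theorem witnessShift_witnessShift (hvw : ∀ i j, B (v i) (w j) = if i = j then 1 else 0)
    {a : M} (ha : ∀ i, B a (w i) = 0) : witnessShift B v w (witnessShift B v u a) = a := by
  rw [witnessShift_apply B v w]
  simp only [witnessShift_apply_of_dual hvw, ha, zero_sub, neg_smul, Finset.sum_neg_distrib,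
    sub_neg_eq_add]
  rw [witnessShift_apply, sub_add_cancel]

theorem witnessShift_isometry (hvv : ∀ i j, B (v i) (v j) = 0) {a b : M}
    (ha : ∀ i, B a (v i) = 0) (hb : ∀ i, B (v i) b = 0) :
    B (witnessShift B v u a) (witnessShift B v u b) = B a b := by
  simp [witnessShift_apply, ha, hb, hvv]

theorem witnessShift_witnessShift_of_mem_orthogonal (hsymm : B.IsSymm)
    (hvw : ∀ i j, B (v i) (w j) = if i = j then 1 else 0) {a : M}
    (ha : a ∈ B.orthogonal (span R (Set.range v ∪ Set.range w))) :
    witnessShift B v w (witnessShift B v u a) = a :=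
  witnessShift_witnessShift hvw fun i => by
    rw [hsymm.eq]; exact ((mem_orthogonal_span_range_union_iff B).1 ha).2 i

noncomputable def witnessShiftEquiv (hsymm : B.IsSymm) (hvv : ∀ i j, B (v i) (v j) = 0)
    (hvw : ∀ i j, B (v i) (w j) = if i = j then 1 else 0)
    (hvw' : ∀ i j, B (v i) (w' j) = if i = j then 1 else 0) :
    B.orthogonal (span R (Set.range v ∪ Set.range w)) ≃ₗ[R]
      B.orthogonal (span R (Set.range v ∪ Set.range w')) :=
  LinearEquiv.ofLinearMap
    ((witnessShift B v w').restrict fun _ ha => witnessShift_mem_orthogonal hsymm hvv hvw'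
      ((mem_orthogonal_span_range_union_iff B).1 ha).1)
    ((witnessShift B v w).restrict fun _ ha => witnessShift_mem_orthogonal hsymm hvv hvw
      ((mem_orthogonal_span_range_union_iff B).1 ha).1)
    (by ext m; exact witnessShift_witnessShift_of_mem_orthogonal hsymm hvw' m.2)
    (by ext m; exact witnessShift_witnessShift_of_mem_orthogonal hsymm hvw m.2)

theorem coe_witnessShiftEquiv (hsymm : B.IsSymm) (hvv : ∀ i j, B (v i) (v j) = 0)
    (hvw : ∀ i j, B (v i) (w j) = if i = j then 1 else 0)
    (hvw' : ∀ i j, B (v i) (w' j) = if i = j then 1 else 0)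
    (m : B.orthogonal (span R (Set.range v ∪ Set.range w))) :
    (witnessShiftEquiv hsymm hvv hvw hvw' m : M) = witnessShift B v w' m :=
  rfl

end WitnessShift

theorem stmt_19_general (R : Type*) [CommRing R]
    (M : Type*) [AddCommGroup M] [Module R M]
    (B : LinearMap.BilinForm R M) (hsymm : B.IsSymm)
    (k : ℕ) (v w w' : Fin k → M) (hv : IsoUnimodSeq R B v)
    (hw : Witnessing R B v w) (hw' : Witnessing R B v w') :
    (∀ a ∈ B.orthogonal (Submodule.span R (Set.range v ∪ Set.range w)),
      (a - ∑ j, B a (w' j) • v j) ∈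
        B.orthogonal (Submodule.span R (Set.range v ∪ Set.range w'))) ∧
    (∀ a ∈ B.orthogonal (Submodule.span R (Set.range v ∪ Set.range w)),
      ∀ b ∈ B.orthogonal (Submodule.span R (Set.range v ∪ Set.range w)),
        B (a - ∑ j, B a (w' j) • v j) (b - ∑ j, B b (w' j) • v j) = B a b) ∧
    ∃ e : B.orthogonal (Submodule.span R (Set.range v ∪ Set.range w)) ≃ₗ[R]
        B.orthogonal (Submodule.span R (Set.range v ∪ Set.range w')),
      ∀ x y : B.orthogonal (Submodule.span R (Set.range v ∪ Set.range w)),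
        B ((e x : M)) ((e y : M)) = B (x : M) (y : M) := by
  obtain ⟨-, -, hvv⟩ := hv
  have orth_v {a : M} (ha : a ∈ B.orthogonal (span R (Set.range v ∪ Set.range w))) :
      ∀ i, B (v i) a = 0 :=
    ((mem_orthogonal_span_range_union_iff B).1 ha).1
  have isometry {a b : M} (ha : a ∈ B.orthogonal (span R (Set.range v ∪ Set.range w)))
      (hb : b ∈ B.orthogonal (span R (Set.range v ∪ Set.range w))) :
      B (witnessShift B v w' a) (witnessShift B v w' b) = B a b :=
    witnessShift_isometry hvv (fun i => by rw [hsymm.eq]; exact orth_v ha i) (orth_v hb)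
  refine ⟨fun a ha => ?_, fun a ha b hb => ?_, witnessShiftEquiv hsymm hvv hw.1 hw'.1,
    fun x y => ?_⟩
  · simpa only [witnessShift_apply] using witnessShift_mem_orthogonal hsymm hvv hw'.1 (orth_v ha)
  · simpa only [witnessShift_apply] using isometry ha hb
  · rw [coe_witnessShiftEquiv, coe_witnessShiftEquiv]
    exact isometry x.2 y.2

/-- If `w` and `w'` are two witnessing sequences to an isotropic
unimodular sequence `v`, then the orthogonal complements of the subforms spanned by
`{vᵢ, wᵢ}` and `{vᵢ, w'ᵢ}` are isometric; explicitly `a ↦ a - ∑ⱼ B(a, w'ⱼ) vⱼ` maps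
the first complement into the second, preserves the form, and gives an isometry. -/
theorem stmt_19 (R : Type*) [CommRing R] [IsDomain R] [IsPrincipalIdealRing R]
    (M : Type*) [AddCommGroup M] [Module R M] [Module.Free R M] [Module.Finite R M]
    (B : LinearMap.BilinForm R M) (hsymm : B.IsSymm)
    (hnd : Function.Bijective fun v : M => B v)
    (k : ℕ) (v w w' : Fin k → M) (hv : IsoUnimodSeq R B v)
    (hw : Witnessing R B v w) (hw' : Witnessing R B v w') :
    (∀ a ∈ B.orthogonal (Submodule.span R (Set.range v ∪ Set.range w)),
      (a - ∑ j, B a (w' j) • v j) ∈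
        B.orthogonal (Submodule.span R (Set.range v ∪ Set.range w'))) ∧
    (∀ a ∈ B.orthogonal (Submodule.span R (Set.range v ∪ Set.range w)),
      ∀ b ∈ B.orthogonal (Submodule.span R (Set.range v ∪ Set.range w)),
        B (a - ∑ j, B a (w' j) • v j) (b - ∑ j, B b (w' j) • v j) = B a b) ∧
    ∃ e : B.orthogonal (Submodule.span R (Set.range v ∪ Set.range w)) ≃ₗ[R]
        B.orthogonal (Submodule.span R (Set.range v ∪ Set.range w')),
      ∀ x y : B.orthogonal (Submodule.span R (Set.range v ∪ Set.range w)),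
        B ((e x : M)) ((e y : M)) = B (x : M) (y : M) :=
  stmt_19_general R M B hsymm k v w w' hv hw hw'
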